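/- Let (R, 𝔪) be a Noetherian local ring. Every ideal I ⊆ R admits a minimal reduction, and any minimal reduction J of I is basic, i.e., J has no reduction other than itself. -/

import Mathlib

/-!
Reductions are transitive, so a minimal reduction `J` of `I` is basic: a reduction of `J` is a
reduction of `I` contained in `J`.

For existence, the ideals between `𝔪I` and `I` satisfy the descending chain condition, since they
correspond to subspaces of the finite-dimensional `R/𝔪`-vector space `I/𝔪I`; let `M` be minimal
among the reductions of `I` in that interval. Lift a basis of `M/𝔪I` to generators of an ideal `K`.
By Nakayama `K` is a reduction of `I`, and the independence of its generators modulo `𝔪I` gives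
`K ∩ 𝔪I ⊆ 𝔪K`. If `L ⊊ K` were a reduction, minimality of `M` would force `L + 𝔪I = M`, hence
`K ⊆ L + 𝔪K`, and Nakayama gives `K = L`.
-/

/-- `J` is a reduction of `I`: `J ⊆ I` and `I^(n+1) = J·I^n` for some `n ≥ 0`. -/
def IsReduction {R : Type*} [CommRing R] (J I : Ideal R) : Prop :=
  J ≤ I ∧ ∃ n : ℕ, I ^ (n + 1) = J * I ^ n

/-- `J` is a minimal reduction of `I`: a reduction of `I` such that no ideal strictly
contained in `J` is a reduction of `I`. -/
def IsMinimalReduction {R : Type*} [CommRing R] (J I : Ideal R) : Prop :=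
  IsReduction J I ∧ ∀ J' : Ideal R, J' < J → ¬ IsReduction J' I

/-- An ideal is basic if it has no reduction other than itself. -/
def Ideal.IsBasic {R : Type*} [CommRing R] (J : Ideal R) : Prop :=
  ∀ J' : Ideal R, IsReduction J' J → J' = J

open IsLocalRing

theorem pow_add_eq_pow_mul_of_pow_succ_eq {M : Type*} [CommMonoid M] {a b : M} {n : ℕ}
    (h : a ^ (n + 1) = b * a ^ n) (k : ℕ) : a ^ (n + k) = b ^ k * a ^ n := by
  induction k with
  | zero => simp
  | succ k ih =>
    calc a ^ (n + (k + 1)) = a ^ (n + k) * a := by rw [← add_assoc, pow_succ]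
      _ = b ^ k * a ^ (n + 1) := by rw [ih, pow_succ, mul_assoc]
      _ = b ^ (k + 1) * a ^ n := by rw [h, pow_succ, mul_assoc]

namespace IsReduction

variable {R : Type*} [CommRing R] {J J' K I : Ideal R}

theorem of_le (hJI : J ≤ I) {n : ℕ} (h : I ^ (n + 1) ≤ J * I ^ n) : IsReduction J I :=
  ⟨hJI, n, h.antisymm <| (Ideal.mul_mono_left hJI).trans_eq (pow_succ' I n).symm⟩

theorem refl (I : Ideal R) : IsReduction I I :=
  of_le le_rfl (n := 0) (by simp)

theorem trans (h' : IsReduction J' J) (h : IsReduction J I) : IsReduction J' I := by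
  obtain ⟨hJ'J, m, hm⟩ := h'
  obtain ⟨hJI, n, hn⟩ := h
  refine of_le (hJ'J.trans hJI) (n := n + m) ?_
  calc I ^ (n + m + 1) = J' * (J ^ m * I ^ n) := by
        rw [add_assoc, pow_add_eq_pow_mul_of_pow_succ_eq hn, hm, mul_assoc]
    _ ≤ J' * (I ^ m * I ^ n) :=
        Ideal.mul_mono_right (Ideal.mul_mono_left (Ideal.pow_right_mono hJI m))
    _ = J' * I ^ (n + m) := by rw [← pow_add, add_comm]

theorem mono (h : IsReduction J I) (hJK : J ≤ K) (hKI : K ≤ I) : IsReduction K I := by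
  obtain ⟨-, n, hn⟩ := h
  exact of_le hKI (hn.trans_le (Ideal.mul_mono_left hJK))

end IsReduction

theorem IsMinimalReduction.isBasic {R : Type*} [CommRing R] {J I : Ideal R}
    (h : IsMinimalReduction J I) : J.IsBasic := fun J' hJ' =>
  by_contra fun hne => h.2 J' (hJ'.1.lt_of_ne hne) (hJ'.trans h.1)

section WellFounded

variable {R : Type*} [CommRing R]

theorem isArtinian_quotient_smul_top (m : Ideal R) [m.IsMaximal] (M : Type*) [AddCommGroup M]
    [Module R M] [Module.Finite R M] : IsArtinian R (M ⧸ m • (⊤ : Submodule R M)) := by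
  let := Ideal.Quotient.field m
  have : Module.Finite (R ⧸ m) (M ⧸ m • (⊤ : Submodule R M)) :=
    Module.Finite.of_restrictScalars_finite R _ _
  exact isArtinian_of_surjective_algebraMap (Ideal.Quotient.mk_surjective (I := m))

theorem Ideal.wellFoundedOn_Icc_mul (m : Ideal R) [m.IsMaximal] {I : Ideal R} (hI : I.FG) :
    (Set.Icc (m * I) I).WellFoundedOn (· < ·) := by
  have : Module.Finite R I := Module.Finite.iff_fg.mpr hI
  have := isArtinian_quotient_smul_top m I
  set N : Submodule R I := m • ⊤
  let f : Ideal R → Submodule R (I ⧸ N) := fun K => (Submodule.comap I.subtype K).map N.mkQ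
  have hf : ∀ K ∈ Set.Icc (m * I) I, ((f K).comap N.mkQ).map I.subtype = K := by
    rintro K ⟨hmK, hKI⟩
    have hNK : N ≤ Submodule.comap I.subtype K := by
      rw [← Submodule.map_le_iff_le_comap, Submodule.map_smul'', Submodule.map_top,
        Submodule.range_subtype, smul_eq_mul]
      exact hmK
    simp only [f, Submodule.comap_map_mkQ, sup_eq_right.mpr hNK, Submodule.map_comap_subtype,
      inf_eq_right.mpr hKI]
  refine ((InvImage.wf f wellFounded_lt).wellFoundedOn).mono' fun K hK L hL hKL => ?_
  refine lt_of_le_of_ne (Submodule.map_mono (Submodule.comap_mono hKL.le)) fun e => hKL.ne ?_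
  rw [← hf K hK, ← hf L hL, show f K = f L from e]

end WellFounded

theorem Ideal.exists_finset_span_sup_eq_and_notMem {R : Type*} [CommRing R] [DecidableEq R]
    {M N : Ideal R} (hM : M.FG) (hNM : N ≤ M) :
    ∃ S : Finset R, span S ⊔ N = M ∧ ∀ x ∈ S, x ∉ span (S.erase x) ⊔ N := by
  obtain ⟨T, hT⟩ := hM
  obtain ⟨S, hS, hmin⟩ := exists_minimal_of_wellFoundedLT (fun S : Finset R => span S ⊔ N = M)
    ⟨T, by rw [← hT] at hNM ⊢; exact sup_eq_left.mpr hNM⟩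
  refine ⟨S, hS, fun x hx hmem => ?_⟩
  have hspan : span S ≤ span (S.erase x) ⊔ N := span_le.mpr fun y hy => by
    by_cases hyx : y = x
    · exact hyx ▸ hmem
    · exact Submodule.mem_sup_left (subset_span (Finset.mem_erase.mpr ⟨hyx, hy⟩))
  have hS' : span (S.erase x) ⊔ N = M :=
    le_antisymm (hS ▸ sup_le_sup_right (span_mono (Finset.erase_subset x S)) N)
      (hS ▸ sup_le hspan le_sup_right)
  exact Finset.notMem_erase x S (hmin hS' (Finset.erase_subset x S) hx)

section Local

variable {R : Type*} [CommRing R] [IsLocalRing R]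

theorem Ideal.span_inf_le_maximalIdeal_mul [DecidableEq R] {S : Finset R} {N : Ideal R}
    (hS : ∀ x ∈ S, x ∉ span (S.erase x) ⊔ N) : span S ⊓ N ≤ maximalIdeal R * span S := by
  rintro z ⟨hzS, hzN⟩
  obtain ⟨f, -, rfl⟩ := Submodule.mem_span_finset.mp hzS
  by_cases hf : ∀ y ∈ S, f y ∈ maximalIdeal R
  · exact Submodule.sum_mem _ fun y hy => mul_mem_mul (hf y hy) (subset_span hy)
  push Not at hf
  obtain ⟨x, hxS, hx⟩ := hf
  have hunit : IsUnit (f x) := by simpa [mem_maximalIdeal, mem_nonunits_iff] using hx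
  refine absurd ?_ (hS x hxS)
  rw [← Finset.add_sum_erase S _ hxS] at hzN
  have : f x • x ∈ span (S.erase x) ⊔ N := by
    rw [← add_sub_cancel_right (f x • x) (∑ y ∈ S.erase x, f y • y)]
    exact sub_mem (Submodule.mem_sup_right hzN) (Submodule.mem_sup_left
      (Submodule.sum_mem _ fun y hy => Submodule.smul_mem _ _ (subset_span hy)))
  simpa [← mul_assoc] using mul_mem_left _ (↑hunit.unit⁻¹ : R) this

variable [IsNoetherianRing R] {I K M : Ideal R}

theorem IsReduction.of_sup_maximalIdeal_mul (hKI : K ≤ I)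
    (h : IsReduction (K ⊔ maximalIdeal R * I) I) : IsReduction K I := by
  obtain ⟨-, n, hn⟩ := h
  refine IsReduction.of_le hKI (n := n) <| Submodule.le_of_le_smul_of_le_jacobson_bot
    (IsNoetherian.noetherian _) (maximalIdeal_le_jacobson ⊥) (hn.trans ?_).le
  rw [Ideal.sup_mul, mul_assoc, ← pow_succ', smul_eq_mul]

theorem exists_minimal_isReduction (I : Ideal R) :
    ∃ M, Minimal (fun L => maximalIdeal R * I ≤ L ∧ IsReduction L I) M :=
  ((Ideal.wellFoundedOn_Icc_mul (maximalIdeal R) (IsNoetherian.noetherian I)).subset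
    fun _ hL => ⟨hL.1, hL.2.1⟩).exists_minimal ⟨I, Ideal.mul_le_right, IsReduction.refl I⟩

theorem isMinimalReduction_of_minimal
    (hM : Minimal (fun L => maximalIdeal R * I ≤ L ∧ IsReduction L I) M)
    (hKM : K ⊔ maximalIdeal R * I = M) (hK : K ⊓ maximalIdeal R * I ≤ maximalIdeal R * K) :
    IsMinimalReduction K I := by
  have hKI : K ≤ I := (le_sup_left.trans hKM.le).trans hM.1.2.1
  refine ⟨.of_sup_maximalIdeal_mul hKI (hKM ▸ hM.1.2), fun L hLK hL => ?_⟩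
  have hLM : L ⊔ maximalIdeal R * I = M :=
    hM.eq_of_le ⟨le_sup_right, hL.mono le_sup_left (sup_le hL.1 Ideal.mul_le_right)⟩
      (hKM ▸ sup_le_sup_right hLK.le _)
  have hK_le : K ≤ L ⊔ maximalIdeal R * K :=
    calc K = (L ⊔ maximalIdeal R * I) ⊓ K := by rw [hLM, ← hKM, inf_eq_right.mpr le_sup_left]
      _ = L ⊔ K ⊓ maximalIdeal R * I := by rw [sup_inf_assoc_of_le _ hLK.le, inf_comm]
      _ ≤ L ⊔ maximalIdeal R * K := sup_le_sup_left hK _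
  exact hLK.not_ge <| Submodule.le_of_le_smul_of_le_jacobson_bot (IsNoetherian.noetherian K)
    (maximalIdeal_le_jacobson ⊥) hK_le

end Local

/-- In a Noetherian local ring every ideal admits a minimal reduction,
and any minimal reduction is basic. -/
theorem stmt17 {R : Type*} [CommRing R] [IsNoetherianRing R] [IsLocalRing R] (I : Ideal R) :
    (∃ J : Ideal R, IsMinimalReduction J I) ∧
    (∀ J : Ideal R, IsMinimalReduction J I → J.IsBasic) := by
  classical
  refine ⟨?_, fun J hJ => hJ.isBasic⟩
  obtain ⟨M, hM⟩ := exists_minimal_isReduction I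
  obtain ⟨S, hSM, hS⟩ := Ideal.exists_finset_span_sup_eq_and_notMem
    (IsNoetherian.noetherian M) hM.1.1
  exact ⟨_, isMinimalReduction_of_minimal hM hSM (Ideal.span_inf_le_maximalIdeal_mul hS)⟩
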